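/- arXiv:2601.13771 — 2 statements merged into one kernel-verified Lean document; each statement's English description precedes it below -/
import Mathlib

section
/- Let V ∈ L^∞(ℝ^d) and let u* ∈ K be a local minimizer of F_V on K. Then V(x) ≤ 0 for almost every x in the topological interior of the set {x : u*(x) = 1} (i.e., the overpopulated region necessarily lies in the favorable region of the potential). -/
set_option maxHeartbeats 1000000
open MeasureTheory Metric Set Real Filter

noncomputable section

/-- The admissible class `K`: Lipschitz functions `u : ℝ^d → ℝ` with `0 ≤ u ≤ 1`
pointwise, `u ∈ L²`, and `|∇u| ∈ L²` (where `∇u` is the a.e. defined gradient,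
realized via Mathlib's `gradient`, which is junk at non-differentiability points). -/
def memK (d : ℕ) (u : EuclideanSpace ℝ (Fin d) → ℝ) : Prop :=
  (∃ L : NNReal, LipschitzWith L u) ∧
  (∀ x, 0 ≤ u x ∧ u x ≤ 1) ∧
  MemLp u 2 (volume : Measure (EuclideanSpace ℝ (Fin d))) ∧
  MemLp (fun x => ‖gradient u x‖) 2 (volume : Measure (EuclideanSpace ℝ (Fin d)))

/-- The energy functional `F_V(u) = ∫ (|∇u|² + V u²)`. -/
def FV (d : ℕ) (V u : EuclideanSpace ℝ (Fin d) → ℝ) : ℝ :=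
  ∫ x : EuclideanSpace ℝ (Fin d), (‖gradient u x‖ ^ 2 + V x * u x ^ 2)

/-- `u` is a local minimizer of `F_V` on `K`. -/
def IsLocalMinimizer (d : ℕ) (V u : EuclideanSpace ℝ (Fin d) → ℝ) : Prop :=
  memK d u ∧ ∃ δ > 0, ∀ v, memK d v →
    (∫ x : EuclideanSpace ℝ (Fin d), (v x - u x) ^ 2)
      + (∫ x : EuclideanSpace ℝ (Fin d), ‖gradient v x - gradient u x‖ ^ 2) ≤ δ →
    FV d V u ≤ FV d V v

/-- `u` is a global minimizer of `F_V` on `K`. -/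
def IsGlobalMinimizer (d : ℕ) (V u : EuclideanSpace ℝ (Fin d) → ℝ) : Prop :=
  memK d u ∧ ∀ v, memK d v → FV d V u ≤ FV d V v

variable {d : ℕ}

abbrev Euc (d : ℕ) := EuclideanSpace ℝ (Fin d)

lemma norm_gradient_eq (f : Euc d → ℝ) (x : Euc d) :
    ‖gradient f x‖ = ‖fderiv ℝ f x‖ :=
  (InnerProductSpace.toDual ℝ (Euc d)).symm.norm_map _

lemma measurable_norm_gradient (f : Euc d → ℝ) :
    Measurable (fun x => ‖gradient f x‖) := by
  have h : Measurable (fun x => gradient f x) :=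
    ((InnerProductSpace.toDual ℝ (Euc d)).symm.continuous.measurable).comp
      (measurable_fderiv ℝ f)
  exact h.norm

/-- cutoff function -/
def cut (x₀ : Euc d) (r s : ℝ) (x : Euc d) : ℝ :=
  min 1 (max 0 ((r + s - dist x x₀) / s))

lemma cut_lip (x₀ : Euc d) (r : ℝ) {s : ℝ} (hs : 0 < s) :
    LipschitzWith (Real.toNNReal s⁻¹) (cut x₀ r s) := by
  have h1 : LipschitzWith 1 (fun t : ℝ => min 1 (max 0 t)) :=
    (LipschitzWith.id.const_max 0).const_min 1
  have h2 : LipschitzWith (Real.toNNReal s⁻¹) (fun t : ℝ => (r + s - t) / s) := by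
    apply LipschitzWith.of_dist_le_mul
    intro a b
    rw [Real.dist_eq, Real.dist_eq, Real.coe_toNNReal _ (by positivity)]
    rw [div_sub_div_same]
    have : r + s - a - (r + s - b) = b - a := by ring
    rw [this, abs_div, abs_of_pos hs, abs_sub_comm]
    rw [div_eq_inv_mul]
  have h3 : LipschitzWith 1 (fun x : Euc d => dist x x₀) := LipschitzWith.dist_left x₀
  have := (h1.comp h2).comp h3
  rw [one_mul, mul_one] at this
  exact this

lemma cut_nonneg (x₀ : Euc d) (r s : ℝ) (x : Euc d) : 0 ≤ cut x₀ r s x :=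
  le_min zero_le_one (le_max_left _ _)

lemma cut_le_one (x₀ : Euc d) (r s : ℝ) (x : Euc d) : cut x₀ r s x ≤ 1 :=
  min_le_left _ _

lemma cut_eq_one (x₀ : Euc d) {r s : ℝ} (hs : 0 < s) {x : Euc d}
    (hx : dist x x₀ ≤ r) : cut x₀ r s x = 1 := by
  have h : (1 : ℝ) ≤ (r + s - dist x x₀) / s := by
    rw [le_div_iff₀ hs]; linarith
  simp only [cut]
  rw [min_eq_left (le_max_of_le_right h)]

lemma cut_eq_zero (x₀ : Euc d) {r s : ℝ} (hs : 0 < s) {x : Euc d}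
    (hx : r + s ≤ dist x x₀) : cut x₀ r s x = 0 := by
  have h : (r + s - dist x x₀) / s ≤ 0 := div_nonpos_of_nonpos_of_nonneg (by linarith) hs.le
  simp only [cut]
  rw [max_eq_left h, min_eq_right zero_le_one]

lemma cut_fderiv_zero (x₀ : Euc d) {r s : ℝ} (hs : 0 < s) {x : Euc d}
    (hx : r + s < dist x x₀) : fderiv ℝ (cut x₀ r s) x = 0 := by
  have hopen : IsOpen {y : Euc d | r + s < dist y x₀} :=
    isOpen_lt continuous_const (continuous_id.dist continuous_const)
  have hev : cut x₀ r s =ᶠ[nhds x] (fun _ => (0:ℝ)) := by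
    filter_upwards [hopen.mem_nhds hx] with y hy
    exact cut_eq_zero x₀ hs (le_of_lt hy)
  rw [hev.fderiv_eq, fderiv_fun_const]
  rfl

lemma cut_grad_bound (x₀ : Euc d) (r : ℝ) {s : ℝ} (hs : 0 < s) (x : Euc d) :
    ‖gradient (cut x₀ r s) x‖ ≤ s⁻¹ := by
  rw [norm_gradient_eq]
  have := norm_fderiv_le_of_lipschitz ℝ (cut_lip x₀ r hs) (x₀ := x)
  rwa [Real.coe_toNNReal _ (by positivity)] at this

lemma cut_grad_indicator (x₀ : Euc d) (r : ℝ) {s : ℝ} (hs : 0 < s) (x : Euc d) :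
    ‖gradient (cut x₀ r s) x‖ ≤ indicator (closedBall x₀ (r + s)) (fun _ => s⁻¹) x := by
  by_cases hx : x ∈ closedBall x₀ (r + s)
  · rw [indicator_of_mem hx]; exact cut_grad_bound x₀ r hs x
  · rw [indicator_of_notMem hx]
    have hd : r + s < dist x x₀ := by simpa [mem_closedBall] using hx
    rw [norm_gradient_eq, cut_fderiv_zero x₀ hs hd]
    simp

lemma cut_hasCompactSupport (x₀ : Euc d) {r s : ℝ} (hs : 0 < s) :
    HasCompactSupport (cut x₀ r s) :=
  HasCompactSupport.intro (isCompact_closedBall x₀ (r + s))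
    (fun x hx => cut_eq_zero x₀ hs (le_of_lt (by simpa [mem_closedBall] using hx)))

lemma gradient_sub_smul (u φ : Euc d → ℝ) (ε : ℝ) {x : Euc d}
    (hu : DifferentiableAt ℝ u x) (hφ : DifferentiableAt ℝ φ x) :
    gradient (fun y => u y - ε * φ y) x = gradient u x - ε • gradient φ x := by
  have h1 : fderiv ℝ (fun y => u y - ε * φ y) x = fderiv ℝ u x - ε • fderiv ℝ φ x := by
    rw [fderiv_fun_sub hu (hφ.const_mul ε), fderiv_const_mul hφ]
  unfold gradient
  rw [h1, map_sub, LinearIsometryEquiv.map_smul]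

lemma gradient_eq_zero_of_interior {u : Euc d → ℝ} {c : ℝ} {x : Euc d}
    (hx : x ∈ interior {y : Euc d | u y = c}) : gradient u x = 0 := by
  have hev : u =ᶠ[nhds x] (fun _ => c) := by
    filter_upwards [isOpen_interior.mem_nhds hx] with y hy
    exact (interior_subset hy : y ∈ {y : Euc d | u y = c})
  unfold gradient
  rw [hev.fderiv_eq, fderiv_fun_const]
  simp

lemma ae_bound_of_memTop {V : Euc d → ℝ} (hV : MemLp V ⊤ (volume : Measure (Euc d))) :
    ∃ C : ℝ, 0 ≤ C ∧ ∀ᵐ x ∂(volume : Measure (Euc d)), |V x| ≤ C := by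
  refine ⟨(eLpNormEssSup V volume).toReal, ENNReal.toReal_nonneg, ?_⟩
  have hfin : eLpNormEssSup V volume ≠ ⊤ := by
    have := hV.2
    rwa [eLpNorm_exponent_top, lt_top_iff_ne_top] at this
  filter_upwards [ae_le_eLpNormEssSup (f := V) (μ := volume)] with x hx
  have : (‖V x‖₊ : ENNReal).toReal ≤ (eLpNormEssSup V volume).toReal :=
    ENNReal.toReal_mono hfin hx
  simpa [Real.norm_eq_abs] using this

lemma cut_gradient_zero (x₀ : Euc d) {r s : ℝ} (hs : 0 < s) {x : Euc d}
    (hx : r + s < dist x x₀) : gradient (cut x₀ r s) x = 0 := by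
  unfold gradient
  rw [cut_fderiv_zero x₀ hs hx]
  simp

lemma key_ineq (V ustar : Euc d → ℝ)
    (hV : MemLp V ⊤ (volume : Measure (Euc d)))
    (hmin : IsLocalMinimizer d V ustar) (x₀ : Euc d) (r s : ℝ) (hs : 0 < s)
    (hsub : closedBall x₀ (r + s) ⊆ interior {x : Euc d | ustar x = 1}) :
    ∫ x : Euc d, V x * cut x₀ r s x ≤ 0 := by
  obtain ⟨C, hC0, hCb⟩ := ae_bound_of_memTop hV
  obtain ⟨⟨L, hL⟩, h01, hu2, hgu2⟩ := hmin.1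
  obtain ⟨δ, hδ, hloc⟩ := hmin.2
  set R := r + s with hR
  set φ : Euc d → ℝ := cut x₀ r s with hφ
  have hφlip := cut_lip x₀ r hs
  have hφcont : Continuous φ := hφlip.continuous
  have hφcs : HasCompactSupport φ := cut_hasCompactSupport x₀ hs
  have hφ0 : ∀ x ∉ closedBall x₀ R, φ x = 0 := fun x hx =>
    cut_eq_zero x₀ hs (le_of_lt (by simpa [mem_closedBall] using hx))
  have hone : ∀ x ∈ closedBall x₀ R, ustar x = 1 := fun x hx =>
    (interior_subset (hsub hx) : x ∈ {y : Euc d | ustar y = 1})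
  have hballm : MeasurableSet (closedBall x₀ R) := measurableSet_closedBall
  have hvol : volume (closedBall x₀ R) ≠ ⊤ := measure_closedBall_lt_top.ne
  have hgradφm : Measurable fun x : Euc d => ‖gradient φ x‖ := measurable_norm_gradient φ
  -- integrable indicator
  have Iind : ∀ c : ℝ, Integrable ((closedBall x₀ R).indicator (fun _ => c))
      (volume : Measure (Euc d)) := fun c => by
    rw [integrable_indicator_iff hballm]
    exact integrableOn_const measure_closedBall_lt_top.ne
  -- square gradient bound
  have hgradsq : ∀ x : Euc d, ‖gradient φ x‖ ^ 2 ≤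
      (closedBall x₀ R).indicator (fun _ => s⁻¹ ^ 2) x := by
    intro x
    by_cases hx : x ∈ closedBall x₀ R
    · rw [indicator_of_mem hx]
      exact pow_le_pow_left₀ (norm_nonneg _) (cut_grad_bound x₀ r hs x) 2
    · rw [indicator_of_notMem hx, cut_gradient_zero x₀ hs
        (by simpa [mem_closedBall] using hx)]
      simp
  have I1 : Integrable (fun x : Euc d => ‖gradient φ x‖ ^ 2) volume := by
    refine Integrable.mono' (Iind (s⁻¹ ^ 2)) ((hgradφm.pow_const 2).aestronglyMeasurable) ?_
    refine ae_of_all _ fun x => ?_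
    rw [Real.norm_eq_abs, abs_of_nonneg (by positivity)]
    exact hgradsq x
  have I2 : Integrable (fun x : Euc d => V x * φ x) volume := by
    refine Integrable.mono' (Iind C) (hV.1.mul hφcont.aestronglyMeasurable) ?_
    filter_upwards [hCb] with x hx
    by_cases hmem : x ∈ closedBall x₀ R
    · rw [indicator_of_mem hmem, Real.norm_eq_abs, abs_mul]
      calc |V x| * |φ x| ≤ C * 1 := by
            apply mul_le_mul hx ?_ (abs_nonneg _) hC0
            rw [abs_of_nonneg (cut_nonneg _ _ _ _)]; exact cut_le_one _ _ _ _
        _ = C := mul_one C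
    · rw [indicator_of_notMem hmem, hφ0 x hmem]
      simp
  have I3 : Integrable (fun x : Euc d => V x * φ x ^ 2) volume := by
    refine Integrable.mono' (Iind C) (hV.1.mul ((hφcont.pow 2).aestronglyMeasurable)) ?_
    filter_upwards [hCb] with x hx
    by_cases hmem : x ∈ closedBall x₀ R
    · rw [indicator_of_mem hmem, Real.norm_eq_abs, abs_mul]
      calc |V x| * |φ x ^ 2| ≤ C * 1 := by
            apply mul_le_mul hx ?_ (abs_nonneg _) hC0
            rw [abs_of_nonneg (by positivity), sq]
            exact mul_le_one₀ (cut_le_one _ _ _ _) (cut_nonneg _ _ _ _) (cut_le_one _ _ _ _)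
        _ = C := mul_one C
    · rw [indicator_of_notMem hmem, hφ0 x hmem]
      simp
  have Iφ2 : Integrable (fun x : Euc d => φ x ^ 2) volume := by
    refine Integrable.mono' (Iind 1) ((hφcont.pow 2).aestronglyMeasurable) ?_
    refine ae_of_all _ fun x => ?_
    by_cases hmem : x ∈ closedBall x₀ R
    · rw [indicator_of_mem hmem, Real.norm_eq_abs, abs_of_nonneg (by positivity), sq]
      exact mul_le_one₀ (cut_le_one _ _ _ _) (cut_nonneg _ _ _ _) (cut_le_one _ _ _ _)
    · rw [indicator_of_notMem hmem, hφ0 x hmem]; simp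
  have I4 : Integrable (fun x : Euc d => ‖gradient ustar x‖ ^ 2) volume := hgu2.integrable_sq
  have I5 : Integrable (fun x : Euc d => V x * ustar x ^ 2) volume := by
    refine Integrable.mono' (hu2.integrable_sq.const_mul C)
      (hV.1.mul ((hu2.1.mul hu2.1).congr (ae_of_all _ fun x => (sq (ustar x)).symm))) ?_
    filter_upwards [hCb] with x hx
    rw [Real.norm_eq_abs, abs_mul, abs_of_nonneg (sq_nonneg (ustar x))]
    exact mul_le_mul_of_nonneg_right hx (sq_nonneg _)
  have Iu : Integrable (fun x : Euc d => ‖gradient ustar x‖ ^ 2 + V x * ustar x ^ 2) volume :=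
    I4.add I5
  have IA : Integrable (fun x : Euc d => ‖gradient φ x‖ ^ 2 + V x * φ x ^ 2) volume := I1.add I3
  set A : ℝ := ∫ x : Euc d, (‖gradient φ x‖ ^ 2 + V x * φ x ^ 2) with hA
  set B : ℝ := ∫ x : Euc d, V x * φ x with hB
  -- Rademacher
  have hdu : ∀ᵐ x ∂(volume : Measure (Euc d)), DifferentiableAt ℝ ustar x :=
    hL.ae_differentiableAt
  have hdφ : ∀ᵐ x ∂(volume : Measure (Euc d)), DifferentiableAt ℝ φ x :=
    hφlip.ae_differentiableAt
  set M : ℝ := (1 + s⁻¹ ^ 2) * (volume (closedBall x₀ R)).toReal with hM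
  have hM0 : 0 ≤ M := by positivity
  -- the epsilon step
  have hstep : ∀ ε : ℝ, 0 < ε → ε ≤ 1 → ε ^ 2 * M ≤ δ → 2 * B ≤ ε * A := by
    intro ε hε hε1 hεδ
    set v : Euc d → ℝ := fun x => ustar x - ε * φ x with hv
    -- gradient identity a.e.
    have hgradv : ∀ᵐ x ∂(volume : Measure (Euc d)),
        gradient v x = gradient ustar x - ε • gradient φ x := by
      filter_upwards [hdu, hdφ] with x hxu hxφ
      exact gradient_sub_smul ustar φ ε hxu hxφ
    -- membership in K
    have hmemK : memK d v := by
      refine ⟨⟨L + (Real.toNNReal ε) * (Real.toNNReal s⁻¹), ?_⟩, ?_, ?_, ?_⟩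
      · have h2 : LipschitzWith ((Real.toNNReal ε) * (Real.toNNReal s⁻¹))
            (fun x : Euc d => ε * φ x) := by
          have hmul : LipschitzWith (Real.toNNReal ε) (fun t : ℝ => ε * t) := by
            apply LipschitzWith.of_dist_le_mul
            intro a b
            rw [Real.dist_eq, Real.dist_eq, Real.coe_toNNReal _ hε.le, ← mul_sub, abs_mul,
              abs_of_pos hε]
          exact hmul.comp hφlip
        exact hL.sub h2
      · intro x
        by_cases hmem : x ∈ closedBall x₀ R
        · have h1 : ustar x = 1 := hone x hmem
          have h2 : 0 ≤ φ x := cut_nonneg _ _ _ _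
          have h3 : φ x ≤ 1 := cut_le_one _ _ _ _
          constructor
          · simp only [hv, h1]
            nlinarith
          · simp only [hv, h1]
            nlinarith
        · simp only [hv, hφ0 x hmem, mul_zero, sub_zero]
          exact h01 x
      · exact hu2.sub ((hφcont.memLp_of_hasCompactSupport hφcs).const_mul ε)
      · have hφgrad2 : MemLp (fun x : Euc d => ‖gradient φ x‖) 2 volume := by
          refine MemLp.mono (memLp_indicator_const 2 hballm s⁻¹ (Or.inr hvol))
            hgradφm.aestronglyMeasurable (ae_of_all _ fun x => ?_)
          rw [Real.norm_eq_abs, abs_of_nonneg (norm_nonneg _)]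
          calc ‖gradient φ x‖ ≤ (closedBall x₀ R).indicator (fun _ => s⁻¹) x :=
                cut_grad_indicator x₀ r hs x
            _ ≤ ‖(closedBall x₀ R).indicator (fun _ => s⁻¹) x‖ := le_abs_self _
        refine MemLp.mono (hgu2.add (hφgrad2.const_mul ε))
          ((measurable_norm_gradient v).aestronglyMeasurable) ?_
        filter_upwards [hgradv] with x hx
        rw [Real.norm_eq_abs, abs_of_nonneg (norm_nonneg _), hx]
        calc ‖gradient ustar x - ε • gradient φ x‖
            ≤ ‖gradient ustar x‖ + ‖ε • gradient φ x‖ := norm_sub_le _ _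
          _ = ‖gradient ustar x‖ + ε * ‖gradient φ x‖ := by
              rw [norm_smul, Real.norm_eq_abs, abs_of_pos hε]
          _ ≤ ‖‖gradient ustar x‖ + ε * ‖gradient φ x‖‖ := le_abs_self _
    -- squared gradient identity a.e.
    have hsq : ∀ᵐ x ∂(volume : Measure (Euc d)),
        ‖gradient v x‖ ^ 2 = ‖gradient ustar x‖ ^ 2 + ε ^ 2 * ‖gradient φ x‖ ^ 2 := by
      filter_upwards [hgradv] with x hx
      by_cases hmem : x ∈ interior {y : Euc d | ustar y = 1}
      · rw [hx, gradient_eq_zero_of_interior hmem, zero_sub, norm_neg, norm_smul,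
          Real.norm_eq_abs, norm_zero, mul_pow, sq_abs]
        ring
      · have hfar : R < dist x x₀ := by
          by_contra hcon
          exact hmem (hsub (mem_closedBall.2 (not_lt.1 hcon)))
        rw [hx, cut_gradient_zero x₀ hs hfar, smul_zero, sub_zero, norm_zero]
        ring
    -- pointwise v² identity
    have hv2 : ∀ x : Euc d, v x ^ 2 = ustar x ^ 2 + (ε ^ 2 * φ x ^ 2 - 2 * ε * φ x) := by
      intro x
      by_cases hmem : x ∈ closedBall x₀ R
      · have h1 : ustar x = 1 := hone x hmem
        simp only [hv, h1]
        ring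
      · simp only [hv, hφ0 x hmem]
        ring
    -- FV identity
    have hFV : FV d V v = FV d V ustar + (ε ^ 2 * A - (2 * ε) * B) := by
      have heq : (fun x : Euc d => ‖gradient v x‖ ^ 2 + V x * v x ^ 2)
          =ᵐ[volume] (fun x => (‖gradient ustar x‖ ^ 2 + V x * ustar x ^ 2)
            + (ε ^ 2 * (‖gradient φ x‖ ^ 2 + V x * φ x ^ 2) - (2 * ε) * (V x * φ x))) := by
        filter_upwards [hsq] with x hx
        rw [hx, hv2 x]
        ring
      have Ia : Integrable (fun x : Euc d => ε ^ 2 * (‖gradient φ x‖ ^ 2 + V x * φ x ^ 2))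
          volume := IA.const_mul (ε ^ 2)
      have Ib : Integrable (fun x : Euc d => (2 * ε) * (V x * φ x)) volume :=
        I2.const_mul (2 * ε)
      have Isub : Integrable (fun x : Euc d =>
          ε ^ 2 * (‖gradient φ x‖ ^ 2 + V x * φ x ^ 2) - (2 * ε) * (V x * φ x)) volume :=
        Ia.sub Ib
      rw [FV, integral_congr_ae heq, integral_add Iu Isub, integral_sub Ia Ib,
        integral_const_mul, integral_const_mul]
      rfl
    -- closeness
    have hclose1 : ∫ x : Euc d, (v x - ustar x) ^ 2 ≤ ε ^ 2 * (volume (closedBall x₀ R)).toReal := by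
      have heq : (fun x : Euc d => (v x - ustar x) ^ 2) = fun x => ε ^ 2 * φ x ^ 2 := by
        funext x
        simp only [hv]
        ring
      rw [heq]
      calc ∫ x : Euc d, ε ^ 2 * φ x ^ 2
          ≤ ∫ x : Euc d, (closedBall x₀ R).indicator (fun _ => ε ^ 2) x := by
            apply integral_mono (Iφ2.const_mul (ε ^ 2)) (Iind (ε ^ 2))
            intro x
            beta_reduce
            by_cases hmem : x ∈ closedBall x₀ R
            · rw [indicator_of_mem hmem]
              have h2 : 0 ≤ φ x := cut_nonneg _ _ _ _
              have h3 : φ x ≤ 1 := cut_le_one _ _ _ _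
              exact mul_le_of_le_one_right (sq_nonneg ε) (by nlinarith)
            · have h0 : φ x = 0 := hφ0 x hmem
              rw [indicator_of_notMem hmem, h0]
              simp
        _ = ε ^ 2 * (volume (closedBall x₀ R)).toReal := by
            rw [integral_indicator_const _ hballm]
            simp [mul_comm, Measure.real]
    have hclose2 : ∫ x : Euc d, ‖gradient v x - gradient ustar x‖ ^ 2
        ≤ ε ^ 2 * s⁻¹ ^ 2 * (volume (closedBall x₀ R)).toReal := by
      have heq : (fun x : Euc d => ‖gradient v x - gradient ustar x‖ ^ 2)
          =ᵐ[volume] fun x => ε ^ 2 * ‖gradient φ x‖ ^ 2 := by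
        filter_upwards [hgradv] with x hx
        rw [hx]
        have : gradient ustar x - ε • gradient φ x - gradient ustar x = -(ε • gradient φ x) := by
          abel
        rw [this, norm_neg, norm_smul, Real.norm_eq_abs, mul_pow, sq_abs]
      rw [integral_congr_ae heq]
      calc ∫ x : Euc d, ε ^ 2 * ‖gradient φ x‖ ^ 2
          ≤ ∫ x : Euc d, (closedBall x₀ R).indicator (fun _ => ε ^ 2 * s⁻¹ ^ 2) x := by
            apply integral_mono (I1.const_mul (ε ^ 2)) (Iind (ε ^ 2 * s⁻¹ ^ 2))
            intro x
            beta_reduce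
            have := hgradsq x
            by_cases hmem : x ∈ closedBall x₀ R
            · rw [indicator_of_mem hmem]
              rw [indicator_of_mem hmem] at this
              nlinarith
            · rw [indicator_of_notMem hmem]
              rw [indicator_of_notMem hmem] at this
              nlinarith [sq_nonneg ε, norm_nonneg (gradient φ x), sq_nonneg ‖gradient φ x‖]
        _ = ε ^ 2 * s⁻¹ ^ 2 * (volume (closedBall x₀ R)).toReal := by
            rw [integral_indicator_const _ hballm]
            simp [mul_comm, Measure.real]
    have hsum : (∫ x : Euc d, (v x - ustar x) ^ 2)
        + (∫ x : Euc d, ‖gradient v x - gradient ustar x‖ ^ 2) ≤ δ := by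
      have : ε ^ 2 * (volume (closedBall x₀ R)).toReal
          + ε ^ 2 * s⁻¹ ^ 2 * (volume (closedBall x₀ R)).toReal = ε ^ 2 * M := by
        rw [hM]; ring
      linarith [hclose1, hclose2]
    have hfin := hloc v hmemK hsum
    rw [hFV] at hfin
    have h0 : 0 ≤ ε ^ 2 * A - (2 * ε) * B := by linarith
    have h1 : ε * (2 * B) ≤ ε * (ε * A) := by nlinarith
    exact (mul_le_mul_iff_right₀ hε).1 h1
  -- conclude B ≤ 0
  by_contra hBpos
  push_neg at hBpos
  set ε : ℝ := min 1 (min (δ / (M + 1)) (B / (|A| + 1))) with hε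
  have hεpos : 0 < ε := by
    apply lt_min one_pos
    apply lt_min (div_pos hδ (by linarith)) (div_pos hBpos (by positivity))
  have hε1 : ε ≤ 1 := min_le_left _ _
  have hεδ' : ε ≤ δ / (M + 1) := le_trans (min_le_right _ _) (min_le_left _ _)
  have hεB : ε ≤ B / (|A| + 1) := le_trans (min_le_right _ _) (min_le_right _ _)
  have hεM : ε ^ 2 * M ≤ δ := by
    have h1 : ε * (M + 1) ≤ δ := (le_div_iff₀ (by linarith)).1 hεδ'
    nlinarith
  have h2B := hstep ε hεpos hε1 hεM
  have hεA : ε * (|A| + 1) ≤ B := (le_div_iff₀ (by positivity)).1 hεB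
  have : ε * A ≤ ε * (|A| + 1) := by
    apply mul_le_mul_of_nonneg_left _ hεpos.le
    calc A ≤ |A| := le_abs_self A
      _ ≤ |A| + 1 := by linarith
  linarith

lemma ball_int (V ustar : Euc d → ℝ)
    (hV : MemLp V ⊤ (volume : Measure (Euc d)))
    (hmin : IsLocalMinimizer d V ustar) (x₀ : Euc d) {r ρ : ℝ} (hrρ : r < ρ)
    (hsub : closedBall x₀ ρ ⊆ interior {x : Euc d | ustar x = 1}) :
    ∫ x in closedBall x₀ r, V x ≤ 0 := by
  obtain ⟨C, hC0, hCb⟩ := ae_bound_of_memTop hV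
  set sn : ℕ → ℝ := fun n => (ρ - r) / (n + 1) with hsn
  have hsnpos : ∀ n, 0 < sn n := fun n => div_pos (by linarith) (by positivity)
  have hsnle : ∀ n : ℕ, sn n ≤ ρ - r := fun n => by
    rw [hsn]
    apply div_le_of_le_mul₀ (by positivity) (by linarith)
    nlinarith [Nat.cast_nonneg (α := ℝ) n]
  have hsn0 : Filter.Tendsto sn atTop (nhds 0) := by
    have : sn = fun n : ℕ => (ρ - r) * (1 / (n + 1)) := by
      funext n; rw [hsn]; ring
    rw [this]
    simpa using tendsto_const_nhds.mul (tendsto_one_div_add_atTop_nhds_zero_nat (𝕜 := ℝ))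
  set F : ℕ → Euc d → ℝ := fun n x => V x * cut x₀ r (sn n) x with hF
  have hcont : ∀ n, Continuous (cut x₀ r (sn n)) := fun n => (cut_lip x₀ r (hsnpos n)).continuous
  have hFmeas : ∀ n, AEStronglyMeasurable (F n) (volume : Measure (Euc d)) := fun n =>
    hV.1.mul (hcont n).aestronglyMeasurable
  have hbound_int : Integrable ((closedBall x₀ ρ).indicator (fun _ => C))
      (volume : Measure (Euc d)) := by
    rw [integrable_indicator_iff measurableSet_closedBall]
    exact integrableOn_const measure_closedBall_lt_top.ne
  have h_bound : ∀ n, ∀ᵐ x ∂(volume : Measure (Euc d)),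
      ‖F n x‖ ≤ (closedBall x₀ ρ).indicator (fun _ => C) x := by
    intro n
    filter_upwards [hCb] with x hx
    by_cases hmem : x ∈ closedBall x₀ ρ
    · rw [indicator_of_mem hmem, hF]
      beta_reduce
      rw [Real.norm_eq_abs, abs_mul]
      calc |V x| * |cut x₀ r (sn n) x| ≤ C * 1 := by
            apply mul_le_mul hx ?_ (abs_nonneg _) hC0
            rw [abs_of_nonneg (cut_nonneg _ _ _ _)]
            exact cut_le_one _ _ _ _
        _ = C := mul_one C
    · rw [indicator_of_notMem hmem, hF]
      beta_reduce
      have hfar : r + sn n ≤ dist x x₀ := by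
        have : ρ < dist x x₀ := by simpa [mem_closedBall] using hmem
        linarith [hsnle n]
      rw [cut_eq_zero x₀ (hsnpos n) hfar, mul_zero, norm_zero]
  have h_lim : ∀ᵐ x ∂(volume : Measure (Euc d)), Filter.Tendsto (fun n => F n x) atTop
      (nhds ((closedBall x₀ r).indicator V x)) := by
    refine ae_of_all _ fun x => ?_
    by_cases hmem : x ∈ closedBall x₀ r
    · have : ∀ n, F n x = V x := fun n => by
        rw [hF]
        beta_reduce
        rw [cut_eq_one x₀ (hsnpos n) (mem_closedBall.1 hmem), mul_one]
      rw [indicator_of_mem hmem]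
      simpa [this] using tendsto_const_nhds
    · have hd : r < dist x x₀ := by simpa [mem_closedBall] using hmem
      have hev : ∀ᶠ n in atTop, F n x = 0 := by
        filter_upwards [hsn0.eventually_lt_const (show (0:ℝ) < dist x x₀ - r by linarith)]
          with n hn
        rw [hF]
        beta_reduce
        rw [cut_eq_zero x₀ (hsnpos n) (by linarith), mul_zero]
      rw [indicator_of_notMem hmem]
      exact Filter.Tendsto.congr' (hev.mono fun n hn => hn.symm) tendsto_const_nhds
  have hTend := tendsto_integral_of_dominated_convergence _ hFmeas hbound_int h_bound h_lim
  have hupper : ∀ n, ∫ x : Euc d, F n x ≤ 0 := by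
    intro n
    apply key_ineq V ustar hV hmin x₀ r (sn n) (hsnpos n)
    refine subset_trans (closedBall_subset_closedBall ?_) hsub
    linarith [hsnle n]
  have hfinal : ∫ x : Euc d, (closedBall x₀ r).indicator V x ≤ 0 :=
    le_of_tendsto hTend (Filter.Eventually.of_forall hupper)
  rwa [integral_indicator measurableSet_closedBall] at hfinal

/-- the overpopulated region lies in the favorable region:
if `u*` is a local minimizer of `F_V` on `K`, then `V ≤ 0` a.e. on the interior
of the saturated set `{u* = 1}`. -/
theorem overpopulated_region
    (d : ℕ) (hd : 2 ≤ d)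
    (V : EuclideanSpace ℝ (Fin d) → ℝ)
    (hV : MemLp V ⊤ (volume : Measure (EuclideanSpace ℝ (Fin d))))
    (ustar : EuclideanSpace ℝ (Fin d) → ℝ)
    (hmin : IsLocalMinimizer d V ustar) :
    ∀ᵐ x ∂((volume : Measure (EuclideanSpace ℝ (Fin d))).restrict
        (interior {x : EuclideanSpace ℝ (Fin d) | ustar x = 1})), V x ≤ 0 := by
  have hVloc : LocallyIntegrable V (volume : Measure (Euc d)) :=
    hV.locallyIntegrable le_top
  have hLeb := (Besicovitch.vitaliFamily (volume : Measure (Euc d))).ae_tendsto_average hVloc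
  rw [ae_restrict_iff' isOpen_interior.measurableSet]
  filter_upwards [hLeb] with x hx hxU
  have hx' : Filter.Tendsto (fun r : ℝ => ⨍ y in closedBall x r, V y)
      (nhdsWithin 0 (Ioi 0)) (nhds (V x)) :=
    hx.comp (Besicovitch.tendsto_filterAt (volume : Measure (Euc d)) x)
  obtain ⟨ρ, hρpos, hρ⟩ := Metric.nhds_basis_closedBall.mem_iff.1
    (isOpen_interior.mem_nhds hxU)
  have hev : ∀ᶠ r in nhdsWithin (0:ℝ) (Ioi 0), ⨍ y in closedBall x r, V y ≤ 0 := by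
    filter_upwards [Ioo_mem_nhdsGT_of_mem (Set.mem_Ico.2 ⟨le_rfl, hρpos⟩)] with r hr
    rw [setAverage_eq]
    have hint : ∫ y in closedBall x r, V y ≤ 0 := ball_int V ustar hV hmin x hr.2 hρ
    have : (0:ℝ) ≤ ((volume : Measure (Euc d)) (closedBall x r)).toReal⁻¹ := by positivity
    rw [smul_eq_mul]
    exact mul_nonpos_of_nonneg_of_nonpos this hint
  exact le_of_tendsto hx' hev
end
end

section
/- (Hopf's lemma for superharmonic functions.) Let d ≥ 2, a ∈ ℝ^d, r > 0, let x₀ ∈ ∂B_r(a), and set ν := (x₀ − a)/r. Let U ⊆ ℝ^d be an open set containing the closed ball B̄_r(a), and let w : U → ℝ be continuously differentiable on U and twice continuously differentiable on the open ball B_r(a) with Δw(x) ≤ 0 for all x ∈ B_r(a). If w(x) > w(x₀) for every x ∈ ∂B_r(a) with x ≠ x₀, then the outward directional derivative is strictly negative: ν · ∇w(x₀) < 0. -/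
open MeasureTheory Metric Set Real
open Filter Topology

noncomputable section

/-- The Laplacian of a function on `ℝ^d`, as the sum of the second derivatives
in the coordinate directions. -/
def lap (d : ℕ) (φ : EuclideanSpace ℝ (Fin d) → ℝ) (x : EuclideanSpace ℝ (Fin d)) : ℝ :=
  ∑ i : Fin d, fderiv ℝ (fun y => fderiv ℝ φ y (EuclideanSpace.single i 1)) x
    (EuclideanSpace.single i 1)

/-- right derivative sign at a one-sided minimum -/
lemma right_deriv_nonneg {g : ℝ → ℝ} {L δ : ℝ} (hδ : 0 < δ)
    (hg : HasDerivAt g L 0) (h : ∀ t ∈ Ioc (0:ℝ) δ, g 0 ≤ g t) : 0 ≤ L := by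
  have hs : Tendsto (slope g 0) (𝓝[>] (0:ℝ)) (𝓝 L) := by
    have := hasDerivWithinAt_iff_tendsto_slope.1 (hg.hasDerivWithinAt (s := Ioi 0))
    simpa [diff_singleton_eq_self (α := ℝ) (notMem_Ioi.2 le_rfl)] using this
  refine ge_of_tendsto hs ?_
  filter_upwards [Ioc_mem_nhdsGT_of_mem ⟨le_rfl, hδ⟩] with t ht
  rw [slope_def_field]
  have h1 := h t ht
  have ht0 : 0 < t := ht.1
  rw [div_eq_mul_inv]
  have h2 : 0 ≤ (g t - g 0) := by linarith
  have h4 : (0:ℝ) < t - 0 := by linarith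
  exact mul_nonneg h2 (inv_nonneg.2 h4.le)

/-- 1D second derivative test: at a local min, the second derivative is nonneg. -/
lemma second_deriv_nonneg_of_isLocalMin {g g' : ℝ → ℝ} {L : ℝ}
    (hg : ∀ᶠ t in 𝓝 (0:ℝ), HasDerivAt g (g' t) t)
    (hg' : HasDerivAt g' L 0) (hmin : IsLocalMin g 0) : 0 ≤ L := by
  by_contra hL
  push_neg at hL
  have h0 : g' 0 = 0 := by
    have h1 := hmin.deriv_eq_zero
    rwa [hg.self_of_nhds.deriv] at h1
  have hs : Tendsto (fun t => g' t / t) (𝓝[>] (0:ℝ)) (𝓝 L) := by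
    have := hasDerivWithinAt_iff_tendsto_slope.1 (hg'.hasDerivWithinAt (s := Ioi 0))
    rw [diff_singleton_eq_self (α := ℝ) (notMem_Ioi.2 le_rfl)] at this
    refine this.congr (fun t => ?_)
    simp [slope_def_field, h0]
  -- eventually g' t < 0 for t > 0 small
  have hneg : ∀ᶠ t in 𝓝[>] (0:ℝ), g' t < 0 := by
    have h2 : ∀ᶠ t in 𝓝[>] (0:ℝ), g' t / t < L / 2 := by
      have := hs.eventually (eventually_lt_nhds (show L < L/2 by linarith))
      exact this
    filter_upwards [h2, self_mem_nhdsWithin] with t ht ht0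
    have ht0 : (0:ℝ) < t := ht0
    nlinarith [div_lt_iff₀ ht0 |>.1 ht]
  have hmin' : ∀ᶠ t in 𝓝 (0:ℝ), g 0 ≤ g t := hmin
  obtain ⟨δ₁, hδ₁, hδball⟩ := Metric.eventually_nhds_iff.1 (hg.and hmin')
  obtain ⟨u, hu, huS⟩ := mem_nhdsGT_iff_exists_Ioc_subset.1 hneg
  set b := min (δ₁/2) u with hbdef
  have hb0 : 0 < b := lt_min (by linarith) hu
  have hbδ : ∀ t ∈ Icc (0:ℝ) b, HasDerivAt g (g' t) t ∧ g 0 ≤ g t := by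
    intro t ht
    refine hδball ?_
    rw [Real.dist_eq, sub_zero, abs_of_nonneg ht.1]
    calc t ≤ b := ht.2
    _ ≤ δ₁/2 := min_le_left _ _
    _ < δ₁ := by linarith
  have hcont : ContinuousOn g (Icc 0 b) := fun t ht => ((hbδ t ht).1).continuousAt.continuousWithinAt
  obtain ⟨c, hc, hceq⟩ := exists_hasDerivAt_eq_slope g g' hb0 hcont
    (fun t ht => (hbδ t (Ioo_subset_Icc_self ht)).1)
  have h1 : g' c < 0 := huS ⟨hc.1, le_trans hc.2.le (min_le_right _ _)⟩
  have h2 : g 0 ≤ g b := (hbδ b ⟨hb0.le, le_rfl⟩).2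
  rw [hceq] at h1
  have h3 : (g b - g 0)/(b-0) ≥ 0 := by
    apply div_nonneg <;> linarith
  linarith

lemma lap_nonneg_of_isLocalMin {d : ℕ} {u : EuclideanSpace ℝ (Fin d) → ℝ}
    {x : EuclideanSpace ℝ (Fin d)} (hu : ContDiffAt ℝ 2 u x) (hmin : IsLocalMin u x) :
    0 ≤ lap d u x := by
  refine Finset.sum_nonneg fun i _ => ?_
  set e := EuclideanSpace.single i (1:ℝ) with he
  set L : ℝ → EuclideanSpace ℝ (Fin d) := fun t => x + t • e with hLdef
  have hL : ∀ t, HasDerivAt L e t := by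
    intro t
    have h := ((hasDerivAt_id t).smul_const e).const_add x
    rw [one_smul] at h
    exact h
  have hL0 : L 0 = x := by simp [hLdef]
  have hLcont : Continuous L := by
    unfold L; fun_prop
  have hev : ∀ᶠ y in 𝓝 x, ContDiffAt ℝ 2 u y := hu.eventually (by simp)
  have hevt : ∀ᶠ t in 𝓝 (0:ℝ), ContDiffAt ℝ 2 u (L t) := by
    have : Tendsto L (𝓝 0) (𝓝 x) := by
      rw [← hL0]; exact hLcont.continuousAt
    exact this.eventually hev
  set g : ℝ → ℝ := fun t => u (L t) with hgdef
  set g' : ℝ → ℝ := fun t => fderiv ℝ u (L t) e with hg'def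
  have hg : ∀ᶠ t in 𝓝 (0:ℝ), HasDerivAt g (g' t) t := by
    filter_upwards [hevt] with t ht
    exact ((ht.differentiableAt two_ne_zero).hasFDerivAt).comp_hasDerivAt t (hL t)
  -- second derivative
  have hf1 : ContDiffAt ℝ 1 (fderiv ℝ u) x := hu.fderiv_right (le_refl _)
  have hdf : DifferentiableAt ℝ (fun y => fderiv ℝ u y e) x := by
    exact ((ContinuousLinearMap.apply ℝ ℝ e).differentiable.differentiableAt).comp x
      (hf1.differentiableAt one_ne_zero)
  have hg' : HasDerivAt g' (fderiv ℝ (fun y => fderiv ℝ u y e) x e) 0 := by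
    have hD : HasFDerivAt (fun y => fderiv ℝ u y e) (fderiv ℝ (fun y => fderiv ℝ u y e) x) (L 0) := by
      rw [hL0]; exact hdf.hasFDerivAt
    have h := hD.comp_hasDerivAt 0 (hL 0)
    exact h
  have hgmin : IsLocalMin g 0 := by
    have h := hmin
    rw [← hL0] at h
    exact h.comp_continuous hLcont.continuousAt
  exact second_deriv_nonneg_of_isLocalMin hg hg' hgmin

lemma exists_min_on_boundary {d : ℕ} (s Ω : Set (EuclideanSpace ℝ (Fin d)))
    (hs : IsCompact s) (hne : s.Nonempty) (hΩ : IsOpen Ω) (hΩs : Ω ⊆ s)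
    (u : EuclideanSpace ℝ (Fin d) → ℝ) (hc : ContinuousOn u s)
    (hreg : ∀ x ∈ Ω, ContDiffAt ℝ 2 u x) (hlap : ∀ x ∈ Ω, lap d u x < 0) :
    ∃ x ∈ s, x ∉ Ω ∧ IsMinOn u s x := by
  obtain ⟨x, hxs, hx⟩ := hs.exists_isMinOn hne hc
  refine ⟨x, hxs, fun hxΩ => ?_, hx⟩
  have hloc : IsLocalMin u x := hx.isLocalMin (Filter.mem_of_superset (hΩ.mem_nhds hxΩ) hΩs)
  exact absurd (lap_nonneg_of_isLocalMin (hreg x hxΩ) hloc) (not_le.2 (hlap x hxΩ))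

lemma radial_hasFDerivAt {d : ℕ} (p y : EuclideanSpace ℝ (Fin d)) (f f' : ℝ → ℝ)
    (hf : HasDerivAt f (f' (‖y - p‖ ^ 2)) (‖y - p‖ ^ 2)) :
    HasFDerivAt (fun z => f (‖z - p‖ ^ 2))
      ((f' (‖y - p‖ ^ 2) * 2) • (innerSL ℝ (y - p))) y := by
  have hA : HasFDerivAt (fun z : EuclideanSpace ℝ (Fin d) => z - p)
      (ContinuousLinearMap.id ℝ _) y := (hasFDerivAt_id y).sub_const p
  have hS : HasFDerivAt (fun z : EuclideanSpace ℝ (Fin d) => ‖z - p‖ ^ 2)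
      ((2:ℝ) • (innerSL ℝ (y - p))) y := by
    have hB := HasFDerivAt.inner (𝕜 := ℝ) hA hA
    have hfun : (fun z : EuclideanSpace ℝ (Fin d) => (inner ℝ (z - p) (z - p) : ℝ))
        = fun z => ‖z - p‖ ^ 2 := funext fun z => real_inner_self_eq_norm_sq _
    rw [hfun] at hB
    refine hB.congr_fderiv ?_
    symm
    refine ContinuousLinearMap.ext fun v => ?_
    simp only [ContinuousLinearMap.smul_apply, innerSL_apply_apply, ContinuousLinearMap.comp_apply,
      ContinuousLinearMap.prod_apply, fderivInnerCLM_apply, ContinuousLinearMap.id_apply,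
      smul_eq_mul]
    rw [real_inner_comm v (y - p)]
    ring
  have := hf.comp_hasFDerivAt y hS
  rw [smul_smul] at this
  exact this

lemma norm_sq_eq_sum {d : ℕ} (v : EuclideanSpace ℝ (Fin d)) :
    ‖v‖ ^ 2 = ∑ i, (v i) ^ 2 := by
  rw [EuclideanSpace.norm_eq, Real.sq_sqrt (by positivity)]
  simp [Real.norm_eq_abs, sq_abs]

lemma lap_radial {d : ℕ} (p x : EuclideanSpace ℝ (Fin d)) (f f' f'' : ℝ → ℝ)
    (h1 : ∀ᶠ s in 𝓝 (‖x - p‖ ^ 2), HasDerivAt f (f' s) s)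
    (h2 : HasDerivAt f' (f'' (‖x - p‖ ^ 2)) (‖x - p‖ ^ 2)) :
    lap d (fun y => f (‖y - p‖ ^ 2)) x
      = 4 * ‖x - p‖ ^ 2 * f'' (‖x - p‖ ^ 2) + 2 * d * f' (‖x - p‖ ^ 2) := by
  have hScont : Continuous (fun y : EuclideanSpace ℝ (Fin d) => ‖y - p‖ ^ 2) := by fun_prop
  have hev : ∀ᶠ y in 𝓝 x, HasDerivAt f (f' (‖y - p‖ ^ 2)) (‖y - p‖ ^ 2) :=
    (hScont.continuousAt).eventually h1
  have hVev : ∀ᶠ y in 𝓝 x,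
      fderiv ℝ (fun z => f (‖z - p‖ ^ 2)) y = (f' (‖y - p‖ ^ 2) * 2) • (innerSL ℝ (y - p)) := by
    filter_upwards [hev] with y hy
    exact (radial_hasFDerivAt p y f f' hy).fderiv
  have key : ∀ i : Fin d,
      fderiv ℝ (fun y => fderiv ℝ (fun z => f (‖z - p‖ ^ 2)) y (EuclideanSpace.single i 1)) x
        (EuclideanSpace.single i 1)
      = f' (‖x - p‖ ^ 2) * 2 + (2 * (x i - p i)) * (f'' (‖x - p‖ ^ 2) * 2 * (x i - p i)) := by
    intro i
    have heq : (fun y => fderiv ℝ (fun z => f (‖z - p‖ ^ 2)) y (EuclideanSpace.single i 1))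
        =ᶠ[𝓝 x] fun y => f' (‖y - p‖ ^ 2) * (2 * (y i - p i)) := by
      filter_upwards [hVev] with y hy
      rw [hy]
      simp only [ContinuousLinearMap.smul_apply, innerSL_apply_apply, smul_eq_mul]
      rw [EuclideanSpace.inner_single_right]
      simp only [RCLike.conj_to_real, conj_trivial]
      have : (y - p) i = y i - p i := rfl
      rw [this]; ring
    rw [heq.fderiv_eq]
    have hA : HasFDerivAt (fun z : EuclideanSpace ℝ (Fin d) => f' (‖z - p‖ ^ 2))
        ((f'' (‖x - p‖ ^ 2) * 2) • (innerSL ℝ (x - p))) x := radial_hasFDerivAt p x f' f'' h2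
    have hB : HasFDerivAt (fun y : EuclideanSpace ℝ (Fin d) => 2 * (y i - p i))
        ((2:ℝ) • (EuclideanSpace.proj i : EuclideanSpace ℝ (Fin d) →L[ℝ] ℝ)) x := by
      have := ((EuclideanSpace.proj i (𝕜 := ℝ)).hasFDerivAt (x := x)).sub_const (p i)
      exact this.const_mul 2
    have := (hA.fun_mul hB).fderiv
    rw [this]
    simp only [ContinuousLinearMap.add_apply, ContinuousLinearMap.smul_apply,
      innerSL_apply_apply, smul_eq_mul]
    rw [EuclideanSpace.inner_single_right]
    simp only [RCLike.conj_to_real, conj_trivial]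
    have h5 : (x - p) i = x i - p i := rfl
    have h6 : (EuclideanSpace.proj i : EuclideanSpace ℝ (Fin d) →L[ℝ] ℝ)
        (EuclideanSpace.single i 1) = 1 := by simp
    rw [h5, h6]
    ring
  unfold lap
  rw [Finset.sum_congr rfl fun i _ => key i]
  rw [Finset.sum_add_distrib]
  have h7 : ∑ i : Fin d, (2 * (x i - p i)) * (f'' (‖x - p‖ ^ 2) * 2 * (x i - p i))
      = 4 * f'' (‖x - p‖ ^ 2) * ∑ i : Fin d, (x i - p i) ^ 2 := by
    rw [Finset.mul_sum]
    exact Finset.sum_congr rfl fun i _ => by ring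
  rw [h7]
  have h8 : ∑ i : Fin d, (x i - p i) ^ 2 = ‖x - p‖ ^ 2 := by
    rw [norm_sq_eq_sum]
    exact Finset.sum_congr rfl fun i _ => by norm_num [show (x - p) i = x i - p i from rfl]
  rw [h8]
  simp [Finset.sum_const, Finset.card_univ]
  ring

lemma diff_fderiv_apply {d : ℕ} {u : EuclideanSpace ℝ (Fin d) → ℝ}
    {x : EuclideanSpace ℝ (Fin d)} (hu : ContDiffAt ℝ 2 u x) (e : EuclideanSpace ℝ (Fin d)) :
    DifferentiableAt ℝ (fun y => fderiv ℝ u y e) x :=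
  ((ContinuousLinearMap.apply ℝ ℝ e).differentiable.differentiableAt).comp x
    ((hu.fderiv_right le_rfl).differentiableAt one_ne_zero)

lemma lap_sub {d : ℕ} (u v : EuclideanSpace ℝ (Fin d) → ℝ) (c ε : ℝ)
    (x : EuclideanSpace ℝ (Fin d)) (hu : ContDiffAt ℝ 2 u x) (hv : ContDiffAt ℝ 2 v x) :
    lap d (fun y => u y - c - ε * v y) x = lap d u x - ε * lap d v x := by
  have huev : ∀ᶠ y in 𝓝 x, ContDiffAt ℝ 2 u y := hu.eventually (by simp)
  have hvev : ∀ᶠ y in 𝓝 x, ContDiffAt ℝ 2 v y := hv.eventually (by simp)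
  have key : ∀ i : Fin d,
      fderiv ℝ (fun y => fderiv ℝ (fun z => u z - c - ε * v z) y (EuclideanSpace.single i 1)) x
        (EuclideanSpace.single i 1)
      = fderiv ℝ (fun y => fderiv ℝ u y (EuclideanSpace.single i 1)) x (EuclideanSpace.single i 1)
        - ε * fderiv ℝ (fun y => fderiv ℝ v y (EuclideanSpace.single i 1)) x
            (EuclideanSpace.single i 1) := by
    intro i
    set e := EuclideanSpace.single i (1:ℝ)
    have heq : (fun y => fderiv ℝ (fun z => u z - c - ε * v z) y e)
        =ᶠ[𝓝 x] fun y => fderiv ℝ u y e - ε * fderiv ℝ v y e := by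
      filter_upwards [huev, hvev] with y hy1 hy2
      have h := (((hy1.differentiableAt two_ne_zero).hasFDerivAt.sub_const c).fun_sub
        ((hy2.differentiableAt two_ne_zero).hasFDerivAt.const_mul ε)).fderiv
      rw [h]
      simp
    rw [heq.fderiv_eq]
    have d1 := diff_fderiv_apply hu e
    have d2 := diff_fderiv_apply hv e
    have h := ((d1.hasFDerivAt).fun_sub ((d2.hasFDerivAt).const_mul ε)).fderiv
    rw [h]
    simp
  unfold lap
  rw [Finset.sum_congr rfl fun i _ => key i, Finset.sum_sub_distrib, Finset.mul_sum]

lemma weak_min_ball {d : ℕ} (hd : 1 ≤ d) (a : EuclideanSpace ℝ (Fin d)) (r : ℝ) (hr : 0 < r)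
    (U : Set (EuclideanSpace ℝ (Fin d))) (hU : IsOpen U) (hUb : closedBall a r ⊆ U)
    (w : EuclideanSpace ℝ (Fin d) → ℝ)
    (hw1 : ContDiffOn ℝ 1 w U) (hw2 : ContDiffOn ℝ 2 w (ball a r))
    (hsuper : ∀ x ∈ ball a r, lap d w x ≤ 0) (c : ℝ) (hb : ∀ y ∈ sphere a r, c ≤ w y) :
    ∀ x ∈ closedBall a r, c ≤ w x := by
  have main : ∀ ε : ℝ, 0 < ε → ∀ x ∈ closedBall a r, c - ε * r ^ 2 ≤ w x := by
    intro ε hε x hx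
    set v : EuclideanSpace ℝ (Fin d) → ℝ := fun y => ‖y - a‖ ^ 2 with hvdef
    have hvC : ContDiff ℝ 2 v := (contDiff_id.sub contDiff_const).norm_sq (𝕜 := ℝ)
    set uε : EuclideanSpace ℝ (Fin d) → ℝ := fun y => w y - 0 - ε * v y with huεdef
    have hlapv : ∀ x' ∈ ball a r, lap d v x' = 2 * d := by
      intro x' _
      have := lap_radial a x' (fun s => s) (fun _ => (1:ℝ)) (fun _ => (0:ℝ))
        (Filter.Eventually.of_forall fun s => hasDerivAt_id s) (hasDerivAt_const _ _)
      simpa using this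
    obtain ⟨y, hys, hynb, hymin⟩ := exists_min_on_boundary (closedBall a r) (ball a r)
      (isCompact_closedBall a r) ⟨a, mem_closedBall_self hr.le⟩ isOpen_ball ball_subset_closedBall
      uε
      (((hw1.continuousOn.mono hUb).sub continuousOn_const).sub
        (continuousOn_const.mul hvC.continuous.continuousOn))
      (fun x' hx' => ((hw2.contDiffAt (isOpen_ball.mem_nhds hx')).sub contDiffAt_const).sub
        (contDiffAt_const.mul hvC.contDiffAt))
      (fun x' hx' => by
        rw [lap_sub w v 0 ε x' (hw2.contDiffAt (isOpen_ball.mem_nhds hx')) hvC.contDiffAt,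
          hlapv x' hx']
        have h1 := hsuper x' hx'
        have h2 : (1:ℝ) ≤ d := by exact_mod_cast hd
        nlinarith)
    have hysph : y ∈ sphere a r := by
      rw [mem_sphere]
      rcases hys with hle
      have : ¬ dist y a < r := fun h => hynb (mem_ball.2 h)
      exact le_antisymm (mem_closedBall.1 hys) (not_lt.1 this)
    have hvy : v y = r ^ 2 := by
      have : ‖y - a‖ = r := by rwa [← dist_eq_norm, ← mem_sphere]
      simp [hvdef, this]
    have h3 := hymin hx
    have h4 : uε y = w y - ε * r ^ 2 := by simp [huεdef, hvy]
    have h5 : uε x = w x - 0 - ε * v x := rfl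
    have h6 : c ≤ w y := hb y hysph
    have h7 : 0 ≤ v x := by positivity
    have h9 : uε y ≤ w x - 0 - ε * v x := by rw [← h5]; exact h3
    rw [h4] at h9
    have h10 : 0 ≤ ε * v x := mul_nonneg hε.le h7
    linarith
  intro x hx
  by_contra hcon
  push_neg at hcon
  have hcw : 0 < c - w x := by linarith
  have hε : 0 < (c - w x) / (2 * r ^ 2) := by positivity
  have := main _ hε x hx
  rw [div_mul_eq_mul_div, mul_comm] at this
  have heq : r ^ 2 * (c - w x) / (2 * r ^ 2) = (c - w x) / 2 := by
    have hr2 : (r:ℝ) ≠ 0 := hr.ne'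
    field_simp
  rw [heq] at this
  linarith

set_option maxHeartbeats 2000000 in
lemma hopf_core {d : ℕ} (hd : 2 ≤ d) (p : EuclideanSpace ℝ (Fin d)) (R : ℝ) (hR : 0 < R)
    (q : EuclideanSpace ℝ (Fin d)) (hq : ‖q - p‖ = R)
    (w : EuclideanSpace ℝ (Fin d) → ℝ)
    (hwc : ContinuousOn w (closedBall p R \ ball p (R/2)))
    (hw2 : ∀ x ∈ ball p R \ closedBall p (R/2), ContDiffAt ℝ 2 w x)
    (hsuper : ∀ x ∈ ball p R \ closedBall p (R/2), lap d w x ≤ 0)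
    (hdq : DifferentiableAt ℝ w q)
    (hge : ∀ x ∈ sphere p R, w q ≤ w x)
    (hgt : ∀ x ∈ sphere p (R/2), w q < w x) :
    fderiv ℝ w q (R⁻¹ • (q - p)) < 0 := by
  have hd1 : 1 ≤ d := le_trans one_le_two hd
  have hd0 : (0:ℝ) < d := by exact_mod_cast lt_of_lt_of_le zero_lt_two (by exact_mod_cast hd)
  -- the minimum of w on the inner sphere
  have hsub : sphere p (R/2) ⊆ closedBall p R \ ball p (R/2) := by
    intro x hx
    rw [mem_sphere] at hx
    constructor
    · rw [mem_closedBall, hx]; linarith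
    · rw [mem_ball, hx]; simp
  have hz₀ : p + (2⁻¹ : ℝ) • (q - p) ∈ sphere p (R/2) := by
    rw [mem_sphere, dist_eq_norm]
    have : p + (2⁻¹ : ℝ) • (q - p) - p = (2⁻¹ : ℝ) • (q - p) := by module
    rw [this, norm_smul, hq]
    norm_num
    linarith
  obtain ⟨z, hzs, hzmin⟩ := (isCompact_sphere p (R/2)).exists_isMinOn ⟨_, hz₀⟩ (hwc.mono hsub)
  set m : ℝ := w z - w q with hmdef
  have hm : 0 < m := by have := hgt z hzs; linarith
  -- the barrier
  set f : ℝ → ℝ := fun s => (s ^ d)⁻¹ - ((R ^ 2) ^ d)⁻¹ with hfdef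
  set f' : ℝ → ℝ := fun s => -(d : ℝ) * (s ^ (d + 1))⁻¹ with hf'def
  set f'' : ℝ → ℝ := fun s => (d : ℝ) * (d + 1) * (s ^ (d + 2))⁻¹ with hf''def
  have hf : ∀ s : ℝ, 0 < s → HasDerivAt f (f' s) s := by
    intro s hs
    have h := ((hasDerivAt_pow d s).inv (by positivity)).sub_const (((R ^ 2) ^ d)⁻¹)
    refine h.congr_deriv ?_
    symm
    have h2 : (s ^ d) ^ 2 = s ^ (d + 1) * s ^ (d - 1) := by
      rw [← pow_add, ← pow_mul]; congr 1; omega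
    rw [hf'def]
    simp only
    rw [h2]
    have hs1 : s ^ (d+1) ≠ 0 := by positivity
    have hs2 : s ^ (d-1) ≠ 0 := by positivity
    field_simp
  have hf' : ∀ s : ℝ, 0 < s → HasDerivAt f' (f'' s) s := by
    intro s hs
    have h := ((hasDerivAt_pow (d + 1) s).inv (by positivity)).const_mul (-(d : ℝ))
    refine h.congr_deriv ?_
    symm
    have h2 : (s ^ (d + 1)) ^ 2 = s ^ (d + 2) * s ^ d := by
      rw [← pow_add, ← pow_mul]; congr 1; omega
    rw [hf''def]
    simp only
    rw [h2]
    have hs1 : s ^ (d+2) ≠ 0 := by positivity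
    have hs2 : s ^ d ≠ 0 := by positivity
    field_simp
    rw [show d + 1 - 1 = d by omega]; push_cast; ring
  set v : EuclideanSpace ℝ (Fin d) → ℝ := fun y => f (‖y - p‖ ^ 2) with hvdef
  have hvCAt : ∀ y : EuclideanSpace ℝ (Fin d), y - p ≠ 0 → ContDiffAt ℝ 2 v y := by
    intro y hy
    have hS : ContDiffAt ℝ 2 (fun y : EuclideanSpace ℝ (Fin d) => ‖y - p‖ ^ 2) y :=
      ((contDiff_id.sub contDiff_const).norm_sq (𝕜 := ℝ)).contDiffAt
    have hSy : (0:ℝ) < ‖y - p‖ ^ 2 := by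
      have := norm_pos_iff.2 hy
      positivity
    have hfAt : ContDiffAt ℝ 2 f (‖y - p‖ ^ 2) := by
      rw [hfdef]
      exact (((contDiffAt_id.pow d).inv (by positivity)).sub contDiffAt_const)
    exact hfAt.comp y hS
  have hlapv : ∀ x : EuclideanSpace ℝ (Fin d), (0:ℝ) < ‖x - p‖ ^ 2 → 0 < lap d v x := by
    intro x hSx
    have h1 : ∀ᶠ s in 𝓝 (‖x - p‖ ^ 2), HasDerivAt f (f' s) s := by
      filter_upwards [IsOpen.mem_nhds isOpen_Ioi hSx] with s hs
      exact hf s hs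
    have h := lap_radial p x f f' f'' h1 (hf' _ hSx)
    rw [hvdef]
    rw [h]
    set S := ‖x - p‖ ^ 2 with hSdef
    have key : 4 * S * f'' S + 2 * ↑d * f' S = (2 * (d:ℝ) ^ 2 + 4 * d) * (S ^ (d + 1))⁻¹ := by
      rw [hf'def, hf''def]
      simp only
      have h2 : S ^ (d + 2) = S * S ^ (d + 1) := by rw [← pow_succ']
      rw [h2]
      have hs1 : S ^ (d+1) ≠ 0 := by positivity
      field_simp
      ring
    rw [key]
    positivity
  -- ε
  set vhalf : ℝ := (((R / 2) ^ 2) ^ d)⁻¹ - ((R ^ 2) ^ d)⁻¹ with hvhalfdef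
  have hvhalf : 0 < vhalf := by
    rw [hvhalfdef, sub_pos]
    apply inv_strictAnti₀
    · positivity
    · apply pow_lt_pow_left₀ _ (by positivity) (by omega)
      nlinarith
  set ε : ℝ := m / vhalf with hεdef
  have hε : 0 < ε := by positivity
  set u : EuclideanSpace ℝ (Fin d) → ℝ := fun y => w y - w q - ε * v y with hudef
  -- apply the minimum principle on the annulus
  have hvq : v q = 0 := by rw [hvdef]; simp only; rw [hq, hfdef]; simp
  obtain ⟨y, hys, hynΩ, hymin⟩ := exists_min_on_boundary
    (closedBall p R \ ball p (R/2)) (ball p R \ closedBall p (R/2))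
    ((isCompact_closedBall p R).diff isOpen_ball)
    ⟨q, by
      constructor
      · rw [mem_closedBall, dist_eq_norm, hq]
      · rw [mem_ball, dist_eq_norm, hq]; intro h; linarith⟩
    (isOpen_ball.sdiff isClosed_closedBall)
    (diff_subset_diff ball_subset_closedBall ball_subset_closedBall)
    u
    ((hwc.sub continuousOn_const).sub (continuousOn_const.mul (fun x hx =>
      (hvCAt x (by
        have : R/2 ≤ dist x p := not_lt.1 (fun h => hx.2 (mem_ball.2 h))
        rw [dist_eq_norm] at this
        intro h0
        rw [h0] at this
        simp at this
        linarith)).continuousAt.continuousWithinAt)))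
    (fun x hx => by
      have hxp : x - p ≠ 0 := by
        have : R/2 < dist x p := not_le.1 (fun h => hx.2 (mem_closedBall.2 h))
        rw [dist_eq_norm] at this
        intro h0
        rw [h0] at this
        simp at this
        linarith
      exact ((hw2 x hx).sub contDiffAt_const).sub (contDiffAt_const.mul (hvCAt x hxp)))
    (fun x hx => by
      have hxp : x - p ≠ 0 := by
        have : R/2 < dist x p := not_le.1 (fun h => hx.2 (mem_closedBall.2 h))
        rw [dist_eq_norm] at this
        intro h0
        rw [h0] at this
        simp at this
        linarith
      have hSx : (0:ℝ) < ‖x - p‖ ^ 2 := by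
        have := norm_pos_iff.2 hxp
        positivity
      rw [lap_sub w v (w q) ε x (hw2 x hx) (hvCAt x hxp)]
      have h1 := hsuper x hx
      have h2 := hlapv x hSx
      nlinarith)
  -- the minimum value is nonnegative
  have hy0 : 0 ≤ u y := by
    have hyR : dist y p ≤ R := mem_closedBall.1 hys.1
    have hyhalf : R/2 ≤ dist y p := not_lt.1 (fun h => hys.2 (mem_ball.2 h))
    have hcases : dist y p = R ∨ dist y p = R/2 := by
      by_contra hcon
      push_neg at hcon
      exact hynΩ ⟨mem_ball.2 (lt_of_le_of_ne hyR hcon.1),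
        fun h => hcon.2 (le_antisymm (mem_closedBall.1 h) hyhalf)⟩
    rcases hcases with hcase | hcase
    · have hvy : v y = 0 := by
        rw [hvdef]
        simp only
        rw [dist_eq_norm] at hcase
        rw [hcase, hfdef]
        simp
      have := hge y (mem_sphere.2 hcase)
      rw [hudef]
      simp only
      rw [hvy]
      linarith
    · have hvy : v y = vhalf := by
        rw [hvdef]
        simp only
        rw [dist_eq_norm] at hcase
        rw [hcase]
      have hwy : w q + m ≤ w y := by
        have := hzmin (mem_sphere.2 hcase)
        rw [hmdef]
        simp only [Set.mem_setOf_eq] at this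
        linarith
      rw [hudef]
      simp only
      rw [hvy, hεdef, div_mul_cancel₀ _ hvhalf.ne']
      linarith
  have hnonneg : ∀ x ∈ closedBall p R \ ball p (R/2), 0 ≤ u x :=
    fun x hx => le_trans hy0 (hymin hx)
  -- directional derivative along the inward segment
  set ν : EuclideanSpace ℝ (Fin d) := R⁻¹ • (q - p) with hνdef
  set c : ℝ → EuclideanSpace ℝ (Fin d) := fun t => q - t • ν with hcdef
  have hc0 : c 0 = q := by rw [hcdef]; simp
  have hqS : (0:ℝ) < ‖q - p‖ ^ 2 := by rw [hq]; positivity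
  have hV : HasFDerivAt v ((f' (‖q - p‖ ^ 2) * 2) • (innerSL ℝ (q - p))) q :=
    radial_hasFDerivAt p q f f' (hf _ hqS)
  have hUd : HasFDerivAt u
      (fderiv ℝ w q - ε • ((f' (‖q - p‖ ^ 2) * 2) • (innerSL ℝ (q - p)))) q :=
    (hdq.hasFDerivAt.sub_const (w q)).sub (hV.const_mul ε)
  have hcurve : HasDerivAt c (-ν) 0 := by
    rw [hcdef]
    have h := ((hasDerivAt_id (0:ℝ)).smul_const ν).const_sub q
    simpa using h
  have hg : HasDerivAt (fun t => u (c t))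
      ((fderiv ℝ w q - ε • ((f' (‖q - p‖ ^ 2) * 2) • (innerSL ℝ (q - p)))) (-ν)) 0 := by
    have hUd' : HasFDerivAt u
        (fderiv ℝ w q - ε • ((f' (‖q - p‖ ^ 2) * 2) • (innerSL ℝ (q - p)))) (c 0) := by
      rw [hc0]; exact hUd
    exact hUd'.comp_hasDerivAt 0 hcurve
  have hmem : ∀ t ∈ Ioc (0:ℝ) (R/2), u (c 0) ≤ u (c t) := by
    intro t ht
    have hct : c t - p = (1 - t * R⁻¹) • (q - p) := by
      rw [hcdef, hνdef]
      simp only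
      rw [smul_smul]
      module
    have hnorm : ‖c t - p‖ = R - t := by
      rw [hct, norm_smul, hq, Real.norm_eq_abs, abs_of_nonneg]
      · field_simp
      · have h1 : t * R⁻¹ ≤ (R/2) * R⁻¹ := by
          apply mul_le_mul_of_nonneg_right ht.2 (by positivity)
        have h2 : (R/2) * R⁻¹ = 2⁻¹ := by field_simp
        rw [h2] at h1
        linarith
    have hmem' : c t ∈ closedBall p R \ ball p (R/2) := by
      constructor
      · rw [mem_closedBall, dist_eq_norm, hnorm]; linarith [ht.1]
      · rw [mem_ball, dist_eq_norm, hnorm]; intro h; linarith [ht.2]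
    rw [hc0]
    have hu0 : u q = 0 := by rw [hudef]; simp only; rw [hvq]; ring
    rw [hu0]
    exact hnonneg _ hmem'
  have hkey := right_deriv_nonneg (by positivity : (0:ℝ) < R/2) hg hmem
  -- evaluate
  have hinner : (inner ℝ (q - p) ν : ℝ) = R := by
    rw [hνdef, real_inner_smul_right, real_inner_self_eq_norm_sq, hq]
    field_simp
  have hkey' : fderiv ℝ w q ν ≤ ε * (f' (‖q - p‖ ^ 2) * 2 * R) := by
    simp only [ContinuousLinearMap.sub_apply, ContinuousLinearMap.smul_apply, innerSL_apply_apply,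
      inner_neg_right, map_neg, smul_eq_mul, mul_neg, neg_neg] at hkey
    rw [hinner] at hkey
    linarith
  have hf'neg : f' (‖q - p‖ ^ 2) < 0 := by
    rw [hf'def]
    simp only
    have : (0:ℝ) < (‖q - p‖ ^ 2) ^ (d + 1) := by positivity
    have h2 : (0:ℝ) < ((‖q - p‖ ^ 2) ^ (d + 1))⁻¹ := by positivity
    nlinarith
  have hfinal : ε * (f' (‖q - p‖ ^ 2) * 2 * R) < 0 := by
    apply mul_neg_of_pos_of_neg hε
    nlinarith
  linarith

set_option maxHeartbeats 2000000 in
/-- Hopf's lemma for superharmonic functions, Corollary A.4: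
if `w` is `C¹` on an open set `U ⊇ B̄_r(a)`, `C²` and superharmonic (`Δw ≤ 0`) on
`B_r(a)`, and `w > w(x₀)` on `∂B_r(a) \ {x₀}`, then the outward directional
derivative `ν·∇w(x₀)` is strictly negative, where `ν = (x₀ − a)/r`. -/
theorem hopf_lemma
    (d : ℕ) (hd : 2 ≤ d) (a : EuclideanSpace ℝ (Fin d)) (r : ℝ) (hr : 0 < r)
    (x₀ : EuclideanSpace ℝ (Fin d)) (hx₀ : x₀ ∈ Metric.sphere a r)
    (U : Set (EuclideanSpace ℝ (Fin d))) (hU : IsOpen U)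
    (hUball : Metric.closedBall a r ⊆ U)
    (w : EuclideanSpace ℝ (Fin d) → ℝ)
    (hw1 : ContDiffOn ℝ 1 w U)
    (hw2 : ContDiffOn ℝ 2 w (Metric.ball a r))
    (hsuper : ∀ x ∈ Metric.ball a r, lap d w x ≤ 0)
    (hbdry : ∀ x ∈ Metric.sphere a r, x ≠ x₀ → w x₀ < w x) :
    (inner ℝ (r⁻¹ • (x₀ - a)) (gradient w x₀) : ℝ) < 0 := by
  classical
  have hd1 : 1 ≤ d := le_trans one_le_two hd
  set c := w x₀ with hcdef
  have hbs : ∀ y ∈ sphere a r, c ≤ w y := by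
    intro y hy
    by_cases hxy : y = x₀
    · rw [hxy]
    · exact (hbdry y hy hxy).le
  have hmin : ∀ x ∈ closedBall a r, c ≤ w x :=
    weak_min_ball hd1 a r hr U hU hUball w hw1 hw2 hsuper c hbs
  have hwcont : ∀ x ∈ U, ContinuousAt w x := fun x hx =>
    hw1.continuousOn.continuousAt (hU.mem_nhds hx)
  have hdiff : ∀ x ∈ U, DifferentiableAt ℝ w x := fun x hx =>
    ((hw1.contDiffAt (hU.mem_nhds hx)).differentiableAt one_ne_zero)
  set Z : Set (EuclideanSpace ℝ (Fin d)) := {x | x ∈ closedBall a r ∧ w x = c} with hZdef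
  have hZeq : Z = closedBall a r ∩ w ⁻¹' {c} := by
    ext x; simp [hZdef]
  have hZclosed : IsClosed Z := by
    rw [hZeq]
    exact (hw1.continuousOn.mono hUball).preimage_isClosed_of_isClosed
      isClosed_closedBall isClosed_singleton
  have hZcpt : IsCompact Z :=
    (isCompact_closedBall a r).of_isClosed_subset hZclosed (fun x hx => hx.1)
  -- interior points where w = c propagate
  have hopen : ∀ y ∈ ball a r, w y = c →
      ∀ x ∈ ball y ((r - dist y a)/4), x ∈ closedBall a r ∧ w x = c := by
    intro y hyball hyc
    by_contra hcon
    push_neg at hcon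
    obtain ⟨p, hp, hpZ⟩ := hcon
    set ρ := (r - dist y a)/4 with hρdef
    have hya : dist y a < r := mem_ball.1 hyball
    have hρ : 0 < ρ := by rw [hρdef]; linarith
    have hpy : dist p y < ρ := mem_ball.1 hp
    have hpball : p ∈ ball a r := by
      rw [mem_ball]
      calc dist p a ≤ dist p y + dist y a := dist_triangle p y a
        _ < ρ + dist y a := by linarith
        _ < r := by rw [hρdef]; linarith
    have hpc : w p ≠ c := hpZ (ball_subset_closedBall hpball)
    have hZne : Z.Nonempty := ⟨y, ball_subset_closedBall hyball, hyc⟩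
    have hpnZ : p ∉ Z := fun h => hpc h.2
    set R := infDist p Z with hRdef
    have hRpos : 0 < R := (hZclosed.notMem_iff_infDist_pos hZne).1 hpnZ
    obtain ⟨q, hqZ, hqd⟩ := hZcpt.exists_infDist_eq_dist hZne p
    have hRle : R ≤ dist p y := infDist_le_dist_of_mem ⟨ball_subset_closedBall hyball, hyc⟩
    have hball : closedBall p R ⊆ ball a r := by
      intro x hx
      rw [mem_ball]
      calc dist x a ≤ dist x p + dist p a := dist_triangle x p a
        _ ≤ R + (dist p y + dist y a) := by
            have h1 := mem_closedBall.1 hx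
            have h2 := dist_triangle p y a
            linarith
        _ < ρ + (ρ + dist y a) := by linarith
        _ ≤ r := by rw [hρdef]; linarith
    have hdisj : ∀ x ∈ ball p R, x ∉ Z := by
      intro x hx hxZ
      have h1 : R ≤ dist p x := infDist_le_dist_of_mem hxZ
      have h2 : dist x p < R := mem_ball.1 hx
      rw [dist_comm] at h1
      linarith
    have hqcb : q ∈ closedBall p R := by
      rw [mem_closedBall, dist_comm, ← hqd]
    have hqball : q ∈ ball a r := hball hqcb
    have hqnorm : ‖q - p‖ = R := by
      rw [← dist_eq_norm, dist_comm, ← hqd]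
    have hfd := hopf_core hd p R hRpos q hqnorm w
      (hw1.continuousOn.mono (fun x hx =>
        hUball (ball_subset_closedBall (hball hx.1))))
      (fun x hx => hw2.contDiffAt (isOpen_ball.mem_nhds (hball (ball_subset_closedBall hx.1))))
      (fun x hx => hsuper x (hball (ball_subset_closedBall hx.1)))
      (hdiff q (hUball (ball_subset_closedBall hqball)))
      (fun x hx => by
        have hxb : x ∈ ball a r := hball (sphere_subset_closedBall hx)
        rw [hqZ.2]
        exact hmin x (ball_subset_closedBall hxb))
      (fun x hx => by
        have hxb : x ∈ ball p R := by
          rw [mem_ball, mem_sphere.1 hx]; linarith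
        have hxar : x ∈ ball a r := hball (ball_subset_closedBall hxb)
        have hxnZ : x ∉ Z := hdisj x hxb
        have h1 : c ≤ w x := hmin x (ball_subset_closedBall hxar)
        have h2 : w x ≠ c := fun h => hxnZ ⟨ball_subset_closedBall hxar, h⟩
        rw [hqZ.2]
        exact lt_of_le_of_ne h1 (Ne.symm h2))
    have hlocmin : IsLocalMin w q := by
      have hball_nhds : ball a r ∈ 𝓝 q := isOpen_ball.mem_nhds hqball
      filter_upwards [hball_nhds] with x hx
      rw [hqZ.2]
      exact hmin x (ball_subset_closedBall hx)
    rw [hlocmin.fderiv_eq_zero] at hfd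
    simp at hfd
  by_cases hA : ∃ y ∈ ball a r, w y = c
  · -- then w ≡ c on the ball, contradicting the boundary hypothesis
    exfalso
    have hballZ : ∀ x ∈ ball a r, w x = c := by
      by_contra hcon
      push_neg at hcon
      obtain ⟨b, hbball, hbc⟩ := hcon
      set A : Set (EuclideanSpace ℝ (Fin d)) := {x | x ∈ ball a r ∧ w x = c} with hAdef
      set B : Set (EuclideanSpace ℝ (Fin d)) := {x | x ∈ ball a r ∧ w x ≠ c} with hBdef
      have hAopen : IsOpen A := by
        rw [Metric.isOpen_iff]
        intro y hy
        refine ⟨(r - dist y a)/4, by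
          have := mem_ball.1 hy.1; rw [hAdef] at hy; exact by
            have := mem_ball.1 hy.1; linarith, ?_⟩
        intro x hx
        have h := hopen y hy.1 hy.2 x hx
        have hxball : x ∈ ball a r := by
          rw [mem_ball]
          have h1 := mem_ball.1 hx
          have h2 := mem_ball.1 hy.1
          calc dist x a ≤ dist x y + dist y a := dist_triangle x y a
            _ < (r - dist y a)/4 + dist y a := by linarith
            _ < r := by linarith
        exact ⟨hxball, h.2⟩
      have hBopen : IsOpen B := by
        rw [isOpen_iff_mem_nhds]
        intro y hy
        have hcont : ContinuousAt w y := hwcont y (hUball (ball_subset_closedBall hy.1))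
        filter_upwards [hcont.eventually_ne hy.2, isOpen_ball.mem_nhds hy.1] with x h1 h2
        exact ⟨h2, h1⟩
      obtain ⟨y, hy⟩ := hA
      have hpre : IsPreconnected (ball a r) := (convex_ball a r).isPreconnected
      obtain ⟨x, hx⟩ := hpre A B hAopen hBopen
        (fun x hx => by
          by_cases h : w x = c
          · exact Or.inl ⟨hx, h⟩
          · exact Or.inr ⟨hx, h⟩)
        ⟨y, hy.1, hy.1, hy.2⟩ ⟨b, hbball, hbball, hbc⟩
      exact hx.2.2.2 hx.2.1.2
    -- continuity to the boundary point z₀ ≠ x₀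
    set z₀ : EuclideanSpace ℝ (Fin d) := (2:ℝ) • a - x₀ with hz₀def
    have hz₀sub : z₀ - a = a - x₀ := by rw [hz₀def]; module
    have hx₀norm : ‖x₀ - a‖ = r := mem_sphere_iff_norm.1 hx₀
    have hz₀s : z₀ ∈ sphere a r := by
      rw [mem_sphere_iff_norm, hz₀sub, ← neg_sub x₀ a, norm_neg, hx₀norm]
    have hz₀ne : z₀ ≠ x₀ := by
      intro h
      have h2 : x₀ - a = a - x₀ := by rw [← hz₀sub, h]
      have h3 : x₀ - a = 0 := by
        have h5 : (x₀ - a) + (x₀ - a) = 0 := by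
          nth_rewrite 2 [h2]
          abel
        rw [← two_smul ℝ] at h5
        rcases smul_eq_zero.1 h5 with h6 | h6
        · norm_num at h6
        · exact h6
      have h7 : ‖x₀ - a‖ = 0 := by rw [h3]; simp
      rw [hx₀norm] at h7; linarith
    have hlt := hbdry z₀ hz₀s hz₀ne
    have hcontz : ContinuousAt w z₀ := hwcont z₀ (hUball (sphere_subset_closedBall hz₀s))
    have hlinez : (fun t : ℝ => a + t • (z₀ - a)) 1 = z₀ := by simp
    have htend : Tendsto (fun t : ℝ => w (a + t • (z₀ - a))) (𝓝[<] (1:ℝ)) (𝓝 (w z₀)) := by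
      have hline : Continuous (fun t : ℝ => a + t • (z₀ - a)) := by fun_prop
      have h1 : Tendsto (fun t : ℝ => a + t • (z₀ - a)) (𝓝 1) (𝓝 z₀) := by
        have h2 : Tendsto (fun t : ℝ => a + t • (z₀ - a)) (𝓝 1) (𝓝 (a + (1:ℝ) • (z₀ - a))) :=
          hline.continuousAt
        simpa using h2
      exact (hcontz.tendsto.comp h1).mono_left nhdsWithin_le_nhds
    have heq : ∀ᶠ t in 𝓝[<] (1:ℝ), w (a + t • (z₀ - a)) = c := by
      filter_upwards [Ioo_mem_nhdsLT_of_mem (⟨zero_lt_one, le_rfl⟩ : (1:ℝ) ∈ Ioc 0 1)]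
        with t ht
      apply hballZ
      rw [mem_ball]
      have : a + t • (z₀ - a) - a = t • (z₀ - a) := by module
      rw [dist_eq_norm, this, norm_smul, Real.norm_eq_abs, abs_of_pos ht.1]
      have hznorm : ‖z₀ - a‖ = r := mem_sphere_iff_norm.1 hz₀s
      rw [hznorm]
      nlinarith [ht.1, ht.2]
    have hwz₀ : w z₀ = c :=
      tendsto_nhds_unique (htend.congr' heq) tendsto_const_nhds
    rw [hwz₀] at hlt
    exact lt_irrefl c hlt
  · -- w > c on the ball: apply the core lemma at x₀
    push_neg at hA
    have hgt : ∀ x ∈ sphere a (r/2), w x₀ < w x := by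
      intro x hx
      have hxball : x ∈ ball a r := by
        rw [mem_ball, mem_sphere.1 hx]; linarith
      have h1 : c ≤ w x := hmin x (ball_subset_closedBall hxball)
      exact lt_of_le_of_ne h1 (Ne.symm (hA x hxball))
    have hfd := hopf_core hd a r hr x₀ (mem_sphere_iff_norm.1 hx₀) w
      (hw1.continuousOn.mono (fun x hx => hUball hx.1))
      (fun x hx => hw2.contDiffAt (isOpen_ball.mem_nhds hx.1))
      (fun x hx => hsuper x hx.1)
      (hdiff x₀ (hUball (sphere_subset_closedBall hx₀)))
      (fun x hx => hbs x hx)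
      hgt
    rw [real_inner_comm]
    rw [show gradient w x₀ = (InnerProductSpace.toDual ℝ _).symm (fderiv ℝ w x₀) from rfl]
    rw [InnerProductSpace.toDual_symm_apply]
    exact hfd
end
end
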